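/- The sequence (ω_n) defined by ω_0 = 0 and ω_{n+1} = ρ̂⁻¹( ρ̌(ω_n) ) for all n ∈ ℕ is well defined (i.e. ω_n ∈ [0,V] and ρ̌(ω_n) lies in the range of ρ̂ for every n), strictly increasing, satisfies ω_n < V for every n ∈ ℕ, and converges to V as n → +∞. -/

import Mathlib

/-!
Write `s_u` for the point with `f'(s_u) = u`, so that `φ_u` is the tangent line of `f_α` at
`α s_u`. For `u < V` the function `f - φ_u` is strictly concave, negative at `0` and `R` and
positive at `s_u`, so `ρ̌(u) < s_u < ρ̂(u)`. Conversely every `x ∈ (0, R)` is the right contact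
point of the tangent line of `f_α` at some `α s` with `s ∈ (0, x)`: this makes the recursion
well defined and increasing. Since the lines `φ_u` evaluated beyond the tangency point decrease
as `u` decreases, `ρ̂` is strictly decreasing. If the increasing sequence `ω_n` had a limit
`L < V`, then `ρ̂(L) < ρ̂(ω_{n+1}) = ρ̌(ω_n) < s_{ω_n}`, whereas `s_{ω_n} < ρ̂(L)` as soon as
`ω_n > f'(ρ̂(L))`, and `f'(ρ̂(L)) < f'(s_L) = L`.
-/

open Set Filter Topology

theorem eq_of_hasDerivAt_of_eqOn_id_mul {f v : ℝ → ℝ} {a b R : ℝ} (hR : 0 < R)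
    (hfv : ∀ ρ ∈ Icc 0 R, f ρ = ρ * v ρ) (hf : HasDerivAt f a 0) (hv : HasDerivAt v b 0) :
    a = v 0 := by
  have h0 : (0 : ℝ) ∈ Icc 0 R := left_mem_Icc.2 hR.le
  have hmul : HasDerivWithinAt f (1 * v 0 + 0 * b) (Icc 0 R) 0 :=
    ((hasDerivAt_id 0).mul hv).hasDerivWithinAt.congr hfv (hfv 0 h0)
  simpa using (uniqueDiffOn_Icc hR 0 h0).eq_deriv _ hf.hasDerivWithinAt hmul

theorem eq_of_hasDerivAt_const_mul_comp_div {f : ℝ → ℝ} {α a u r : ℝ} (hα : α ≠ 0)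
    (h : HasDerivAt (fun x => α * f (x / α)) u r) (hf : HasDerivAt f a (r / α)) : a = u := by
  have hcomp := (hf.comp r ((hasDerivAt_id r).div_const α)).const_mul α
  rw [h.unique hcomp]
  field_simp

theorem exists_strictMono_tendsto_of_step {V : ℝ} {c h : ℝ → ℝ} (hV : 0 < V)
    (step : ∀ u ∈ Ico 0 V, ∃ w ∈ Ioo u V, h w = c u) (anti : StrictAntiOn h (Ico 0 V))
    (near : ∀ L ∈ Ico 0 V, ∀ᶠ u in 𝓝[<] L, 0 ≤ u → c u < h L) :
    ∃ ω : ℕ → ℝ, ω 0 = 0 ∧ (∀ n, ω n ∈ Ico 0 V ∧ h (ω (n + 1)) = c (ω n)) ∧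
      StrictMono ω ∧ Tendsto ω atTop (𝓝 V) := by
  choose! next hnext_mem hnext using step
  set ω : ℕ → ℝ := fun n => next^[n] 0
  have hsucc : ∀ n, ω (n + 1) = next (ω n) := fun n => Function.iterate_succ_apply' next n 0
  have hmem : ∀ n, ω n ∈ Ico 0 V := by
    intro n
    induction n with
    | zero => exact ⟨le_rfl, hV⟩
    | succ n ih =>
      rw [hsucc]
      exact ⟨ih.1.trans (hnext_mem _ ih).1.le, (hnext_mem _ ih).2⟩
  have hmono : StrictMono ω := strictMono_nat_of_lt_succ fun n => by
    rw [hsucc]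
    exact (hnext_mem _ (hmem n)).1
  have hstep : ∀ n, h (ω (n + 1)) = c (ω n) := fun n => by rw [hsucc, hnext _ (hmem n)]
  have hlim : Tendsto ω atTop (𝓝 (⨆ n, ω n)) :=
    tendsto_atTop_ciSup hmono.monotone ⟨V, by rintro _ ⟨n, rfl⟩; exact (hmem n).2.le⟩
  set L := ⨆ n, ω n
  have hωL : ∀ n, ω n < L := fun n =>
    (hmono (Nat.lt_succ_self n)).trans_le (hmono.monotone.ge_of_tendsto hlim (n + 1))
  have hL : L ∈ Icc 0 V :=
    ⟨(hmem 0).1.trans (hωL 0).le, le_of_tendsto' hlim fun n => (hmem n).2.le⟩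
  refine ⟨ω, rfl, fun n => ⟨hmem n, hstep n⟩, hmono, ?_⟩
  obtain rfl | hLV := hL.2.eq_or_lt
  · exact hlim
  exfalso
  have hlim' : Tendsto ω atTop (𝓝[<] L) :=
    tendsto_nhdsWithin_of_tendsto_nhds_of_eventually_within _ hlim (Eventually.of_forall hωL)
  obtain ⟨n, hn⟩ :=
    ((hlim'.eventually (near L ⟨hL.1, hLV⟩)).and (Eventually.of_forall hmem)).exists
  exact (anti (hmem (n + 1)) ⟨hL.1, hLV⟩ (hωL (n + 1))).not_gt (hstep n ▸ hn.1 hn.2.1)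

/-- The tangent line of `ρ ↦ α f (ρ / α)` at `ρ = α s`; it is `φ_u` for `u = f' s`. -/
def reducedTangent (f f' : ℝ → ℝ) (α s ρ : ℝ) : ℝ := α * f s + f' s * (ρ - α * s)

def contactSet (f f' : ℝ → ℝ) (R α s : ℝ) : Set ℝ :=
  {ρ | ρ ∈ Icc 0 R ∧ f ρ = reducedTangent f f' α s ρ}

structure StrictConcaveFlux (f f' : ℝ → ℝ) (R : ℝ) : Prop where
  pos : 0 < R
  map_zero : f 0 = 0
  map_right : f R = 0
  hasDerivAt : ∀ x ∈ Icc 0 R, HasDerivAt f (f' x) x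
  continuousOn_deriv : ContinuousOn f' (Icc 0 R)
  strictAntiOn_deriv : StrictAntiOn f' (Icc 0 R)

namespace StrictConcaveFlux

variable {f f' : ℝ → ℝ} {R α s x : ℝ}

theorem continuousOn (hf : StrictConcaveFlux f f' R) : ContinuousOn f (Icc 0 R) :=
  fun x hx => (hf.hasDerivAt x hx).continuousAt.continuousWithinAt

theorem strictConcaveOn (hf : StrictConcaveFlux f f' R) : StrictConcaveOn ℝ (Icc 0 R) f := by
  refine StrictAntiOn.strictConcaveOn_of_deriv (convex_Icc 0 R) hf.continuousOn ?_
  rw [interior_Icc]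
  intro x hx y hy hxy
  rw [(hf.hasDerivAt x (Ioo_subset_Icc_self hx)).deriv,
    (hf.hasDerivAt y (Ioo_subset_Icc_self hy)).deriv]
  exact hf.strictAntiOn_deriv (Ioo_subset_Icc_self hx) (Ioo_subset_Icc_self hy) hxy

theorem lt_tangent (hf : StrictConcaveFlux f f' R) {a b : ℝ} (ha : a ∈ Icc 0 R)
    (hb : b ∈ Icc 0 R) (hab : a ≠ b) : f b < f a + f' a * (b - a) := by
  rcases hab.lt_or_gt with h | h
  · have := hf.strictConcaveOn.slope_lt_of_hasDerivAt ha hb h (hf.hasDerivAt a ha)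
    rw [slope_def_field, div_lt_iff₀ (sub_pos.2 h)] at this
    linarith
  · have := hf.strictConcaveOn.lt_slope_of_hasDerivAt hb ha h (hf.hasDerivAt a ha)
    rw [slope_def_field, lt_div_iff₀ (sub_pos.2 h)] at this
    linarith

theorem deriv_zero_pos (hf : StrictConcaveFlux f f' R) : 0 < f' 0 := by
  have := hf.lt_tangent (left_mem_Icc.2 hf.pos.le) (right_mem_Icc.2 hf.pos.le) hf.pos.ne
  rw [hf.map_zero, hf.map_right, zero_add, sub_zero] at this
  exact pos_of_mul_pos_left this hf.pos.le

theorem deriv_right_neg (hf : StrictConcaveFlux f f' R) : f' R < 0 := by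
  have := hf.lt_tangent (right_mem_Icc.2 hf.pos.le) (left_mem_Icc.2 hf.pos.le) hf.pos.ne'
  rw [hf.map_zero, hf.map_right] at this
  nlinarith [hf.pos]

theorem mul_deriv_lt (hf : StrictConcaveFlux f f' R) (hs : s ∈ Ioc 0 R) : s * f' s < f s := by
  have := hf.lt_tangent (Ioc_subset_Icc_self hs) (left_mem_Icc.2 hf.pos.le) hs.1.ne'
  rw [hf.map_zero] at this
  linarith

theorem mem_Ioo_of_deriv_mem_Ico (hf : StrictConcaveFlux f f' R) (hs : s ∈ Icc 0 R)
    (h : f' s ∈ Ico 0 (f' 0)) : s ∈ Ioo 0 R := by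
  refine ⟨hs.1.lt_of_ne ?_, hs.2.lt_of_ne ?_⟩ <;> rintro rfl
  · exact h.2.false
  · exact (h.1.trans_lt hf.deriv_right_neg).false

theorem lt_reducedTangent_zero (hf : StrictConcaveFlux f f' R) (hα : 0 < α) (hs : s ∈ Ioc 0 R) :
    f 0 < reducedTangent f f' α s 0 := by
  have := hf.mul_deriv_lt hs
  rw [hf.map_zero, reducedTangent]
  nlinarith

theorem reducedTangent_self_lt (hf : StrictConcaveFlux f f' R) (hα : α < 1) (hs : s ∈ Ioc 0 R) :
    reducedTangent f f' α s s < f s := by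
  have := hf.mul_deriv_lt hs
  rw [reducedTangent]
  nlinarith

theorem lt_reducedTangent_right (hf : StrictConcaveFlux f f' R) (hα : α ∈ Ioo 0 1)
    (hs : s ∈ Ioc 0 R) (hs' : 0 ≤ f' s) : f R < reducedTangent f f' α s R := by
  have hfs : 0 < f s := (mul_nonneg hs.1.le hs').trans_lt (hf.mul_deriv_lt hs)
  have hαs : α * s ≤ R := (mul_le_of_le_one_left hs.1.le hα.2.le).trans hs.2
  rw [hf.map_right, reducedTangent]
  nlinarith [mul_pos hα.1 hfs, mul_nonneg hs' (sub_nonneg.2 hαs)]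

theorem strictAntiOn_sub_reducedTangent (hf : StrictConcaveFlux f f' R) (hs : s ∈ Icc 0 R) :
    StrictAntiOn (fun ρ => f ρ - reducedTangent f f' α s ρ) (Icc s R) := by
  intro x hx y hy hxy
  have hx' : x ∈ Icc 0 R := ⟨hs.1.trans hx.1, hx.2⟩
  have hy' : y ∈ Icc 0 R := ⟨hs.1.trans hy.1, hy.2⟩
  have htan := hf.lt_tangent hx' hy' hxy.ne
  have hder := hf.strictAntiOn_deriv.antitoneOn hs hx' hx.1
  simp only [reducedTangent]
  nlinarith [mul_le_mul_of_nonneg_right hder (sub_nonneg.2 hxy.le)]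

theorem reducedTangent_lt_of_lt (hf : StrictConcaveFlux f f' R) (hα : α ∈ Icc 0 1)
    {s₁ s₂ : ℝ} (hs₁ : 0 ≤ s₁) (h₁₂ : s₁ < s₂) (h₂ : s₂ < x) (hx : x ≤ R) :
    reducedTangent f f' α s₂ x < reducedTangent f f' α s₁ x := by
  have hs₁' : s₁ ∈ Icc 0 R := ⟨hs₁, (h₁₂.trans h₂).le.trans hx⟩
  have hs₂' : s₂ ∈ Icc 0 R := ⟨hs₁.trans h₁₂.le, h₂.le.trans hx⟩
  have htan := hf.lt_tangent hs₁' hs₂' h₁₂.ne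
  have hder := hf.strictAntiOn_deriv hs₁' hs₂' h₁₂
  have hαs : α * s₂ ≤ s₂ := mul_le_of_le_one_left hs₂'.1 hα.2
  -- `φ₁ x - φ₂ x = α (f s₁ + f' s₁ (s₂ - s₁) - f s₂) + (f' s₁ - f' s₂) (x - α s₂)`
  simp only [reducedTangent]
  nlinarith [mul_nonneg hα.1 (sub_nonneg.2 htan.le),
    mul_pos (sub_pos.2 hder) (sub_pos.2 (hαs.trans_lt h₂))]

theorem exists_mem_contactSet_left (hf : StrictConcaveFlux f f' R) (hα : α ∈ Ioo 0 1)
    (hs : s ∈ Ioc 0 R) : ∃ ρ ∈ Ioo 0 s, ρ ∈ contactSet f f' R α s := by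
  have hsub : Icc 0 s ⊆ Icc 0 R := Icc_subset_Icc_right hs.2
  have hcont : ContinuousOn (fun ρ => f ρ - reducedTangent f f' α s ρ) (Icc 0 s) :=
    (hf.continuousOn.mono hsub).sub (by unfold reducedTangent; fun_prop)
  obtain ⟨ρ, hρ, hρ0⟩ := intermediate_value_Ioo hs.1.le hcont
    ⟨sub_neg.2 (hf.lt_reducedTangent_zero hα.1 hs),
      sub_pos.2 (hf.reducedTangent_self_lt hα.2 hs)⟩
  exact ⟨ρ, hρ, hsub (Ioo_subset_Icc_self hρ), sub_eq_zero.1 hρ0⟩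

theorem exists_mem_contactSet_right (hf : StrictConcaveFlux f f' R) (hα : α ∈ Ioo 0 1)
    (hs : s ∈ Ioo 0 R) (hs' : 0 ≤ f' s) : ∃ ρ ∈ Ioo s R, ρ ∈ contactSet f f' R α s := by
  have hsub : Icc s R ⊆ Icc 0 R := Icc_subset_Icc_left hs.1.le
  have hcont : ContinuousOn (fun ρ => f ρ - reducedTangent f f' α s ρ) (Icc s R) :=
    (hf.continuousOn.mono hsub).sub (by unfold reducedTangent; fun_prop)
  obtain ⟨ρ, hρ, hρ0⟩ := intermediate_value_Ioo' hs.2.le hcont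
    ⟨sub_neg.2 (hf.lt_reducedTangent_right hα (Ioo_subset_Ioc_self hs) hs'),
      sub_pos.2 (hf.reducedTangent_self_lt hα.2 (Ioo_subset_Ioc_self hs))⟩
  exact ⟨ρ, hρ, hsub (Ioo_subset_Icc_self hρ), sub_eq_zero.1 hρ0⟩

theorem mem_Ioo_of_isLeast_contactSet (hf : StrictConcaveFlux f f' R) (hα : α ∈ Ioo 0 1)
    (hs : s ∈ Ioc 0 R) {c : ℝ} (hc : IsLeast (contactSet f f' R α s) c) : c ∈ Ioo 0 s := by
  obtain ⟨ρ, hρ, hρmem⟩ := hf.exists_mem_contactSet_left hα hs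
  refine ⟨hc.1.1.1.lt_of_ne ?_, (hc.2 hρmem).trans_lt hρ.2⟩
  rintro rfl
  exact (hf.lt_reducedTangent_zero hα.1 hs).ne hc.1.2

theorem lt_of_isGreatest_contactSet (hf : StrictConcaveFlux f f' R) (hα : α ∈ Ioo 0 1)
    (hs : s ∈ Ioo 0 R) (hs' : 0 ≤ f' s) {r : ℝ} (hr : IsGreatest (contactSet f f' R α s) r) :
    s < r := by
  obtain ⟨ρ, hρ, hρmem⟩ := hf.exists_mem_contactSet_right hα hs hs'
  exact hρ.1.trans_le (hr.2 hρmem)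

theorem eq_of_isGreatest_contactSet (hf : StrictConcaveFlux f f' R) (hs : s ∈ Icc 0 R) {r : ℝ}
    (hr : IsGreatest (contactSet f f' R α s) r) (hx : x ∈ contactSet f f' R α s) (hsx : s ≤ x) :
    r = x :=
  (hf.strictAntiOn_sub_reducedTangent (α := α) hs).injOn ⟨hsx.trans (hr.2 hx), hr.1.1.2⟩
    ⟨hsx, hx.1.2⟩ (by simp only [← hr.1.2, ← hx.2, sub_self])

theorem exists_mem_contactSet_of_mem_Ioo (hf : StrictConcaveFlux f f' R) (hα : α ∈ Ioo 0 1)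
    (hx : x ∈ Ioo 0 R) : ∃ s ∈ Ioo 0 x, x ∈ contactSet f f' R α s := by
  have hsub : Icc 0 x ⊆ Icc 0 R := Icc_subset_Icc_right hx.2.le
  have hcont : ContinuousOn (fun s => reducedTangent f f' α s x - f x) (Icc 0 x) :=
    (((hf.continuousOn.mono hsub).const_smul α).add
      ((hf.continuousOn_deriv.mono hsub).mul (by fun_prop))).sub continuousOn_const
  have h0 := hf.lt_tangent (left_mem_Icc.2 hf.pos.le) (Ioo_subset_Icc_self hx) hx.1.ne
  have hx' := hf.mul_deriv_lt (Ioo_subset_Ioc_self hx)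
  have hmem :
      (0 : ℝ) ∈ Ioo (reducedTangent f f' α x x - f x) (reducedTangent f f' α 0 x - f x) := by
    simp only [reducedTangent, hf.map_zero] at h0 ⊢
    constructor <;> nlinarith [mul_pos (sub_pos.2 hα.2) (sub_pos.2 hx')]
  obtain ⟨s, hs, hs0⟩ := intermediate_value_Ioo' hx.1.le hcont hmem
  exact ⟨s, hs, Ioo_subset_Icc_self hx, (sub_eq_zero.1 hs0).symm⟩

section Contact

variable {V u : ℝ} {S rc rh : ℝ → ℝ}

theorem tangency_mem_Ioo (hf : StrictConcaveFlux f f' R) (hV : f' 0 = V)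
    (hS : ∀ u ∈ Icc 0 V, S u ∈ Icc 0 R ∧ f' (S u) = u) (hu : u ∈ Ico 0 V) :
    S u ∈ Ioo 0 R := by
  obtain ⟨hSu, hf'Su⟩ := hS u (Ico_subset_Icc_self hu)
  exact hf.mem_Ioo_of_deriv_mem_Ico hSu (by rwa [hf'Su, hV])

theorem strictAntiOn_maxContact (hf : StrictConcaveFlux f f' R) (hα : α ∈ Ioo 0 1)
    (hV : f' 0 = V) (hS : ∀ u ∈ Icc 0 V, S u ∈ Icc 0 R ∧ f' (S u) = u)
    (hrh : ∀ u ∈ Icc 0 V, IsGreatest (contactSet f f' R α (S u)) (rh u)) :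
    StrictAntiOn rh (Ico 0 V) := by
  intro u hu w hw huw
  obtain ⟨hSu, hf'Su⟩ := hS u (Ico_subset_Icc_self hu)
  obtain ⟨hSw, hf'Sw⟩ := hS w (Ico_subset_Icc_self hw)
  have hSwu : S w < S u := (hf.strictAntiOn_deriv.lt_iff_gt hSu hSw).1 (by rwa [hf'Su, hf'Sw])
  obtain ⟨hrhu, hrhu_eq⟩ := (hrh u (Ico_subset_Icc_self hu)).1
  have hlt : S u < rh u := hf.lt_of_isGreatest_contactSet hα (hf.tangency_mem_Ioo hV hS hu)
    (hf'Su.symm ▸ hu.1) (hrh u (Ico_subset_Icc_self hu))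
  have hbelow : f (rh u) < reducedTangent f f' α (S w) (rh u) := by
    rw [hrhu_eq]
    exact hf.reducedTangent_lt_of_lt (Ioo_subset_Icc_self hα) hSw.1 hSwu hlt hrhu.2
  by_contra! hle
  obtain ⟨hrhw, hrhw_eq⟩ := (hrh w (Ico_subset_Icc_self hw)).1
  have := (hf.strictAntiOn_sub_reducedTangent (α := α) hSw).antitoneOn
    ⟨hSwu.le.trans hlt.le, hrhu.2⟩ ⟨hSwu.le.trans (hlt.trans_le hle).le, hrhw.2⟩ hle
  linarith

theorem exists_maxContact_eq_minContact (hf : StrictConcaveFlux f f' R) (hα : α ∈ Ioo 0 1)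
    (hV : f' 0 = V) (hS : ∀ u ∈ Icc 0 V, S u ∈ Icc 0 R ∧ f' (S u) = u)
    (hrc : ∀ u ∈ Icc 0 V, IsLeast (contactSet f f' R α (S u)) (rc u))
    (hrh : ∀ u ∈ Icc 0 V, IsGreatest (contactSet f f' R α (S u)) (rh u)) :
    ∀ u ∈ Ico 0 V, ∃ w ∈ Ioo u V, rh w = rc u := by
  intro u hu
  obtain ⟨hSu, hf'Su⟩ := hS u (Ico_subset_Icc_self hu)
  have hSu' := hf.tangency_mem_Ioo hV hS hu
  have hrcu := hf.mem_Ioo_of_isLeast_contactSet hα (Ioo_subset_Ioc_self hSu')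
    (hrc u (Ico_subset_Icc_self hu))
  obtain ⟨s, hs, hrc_mem⟩ :=
    hf.exists_mem_contactSet_of_mem_Ioo hα ⟨hrcu.1, hrcu.2.trans hSu'.2⟩
  have hs' : s ∈ Icc 0 R := ⟨hs.1.le, hs.2.le.trans hrc_mem.1.2⟩
  have hwu : u < f' s := hf'Su ▸ hf.strictAntiOn_deriv hs' hSu (hs.2.trans hrcu.2)
  have hwV : f' s < V := hV ▸ hf.strictAntiOn_deriv (left_mem_Icc.2 hf.pos.le) hs' hs.1
  have hw : f' s ∈ Icc 0 V := ⟨hu.1.trans hwu.le, hwV.le⟩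
  have hSw : S (f' s) = s := hf.strictAntiOn_deriv.injOn (hS _ hw).1 hs' (hS _ hw).2
  refine ⟨f' s, ⟨hwu, hwV⟩, ?_⟩
  rw [← hSw] at hrc_mem hs
  exact hf.eq_of_isGreatest_contactSet (hS _ hw).1 (hrh _ hw) hrc_mem hs.2.le

theorem eventually_minContact_lt_maxContact (hf : StrictConcaveFlux f f' R) (hα : α ∈ Ioo 0 1)
    (hV : f' 0 = V) (hS : ∀ u ∈ Icc 0 V, S u ∈ Icc 0 R ∧ f' (S u) = u)
    (hrc : ∀ u ∈ Icc 0 V, IsLeast (contactSet f f' R α (S u)) (rc u))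
    (hrh : ∀ u ∈ Icc 0 V, IsGreatest (contactSet f f' R α (S u)) (rh u)) :
    ∀ L ∈ Ico 0 V, ∀ᶠ u in 𝓝[<] L, 0 ≤ u → rc u < rh L := by
  intro L hL
  obtain ⟨hSL, hf'SL⟩ := hS L (Ico_subset_Icc_self hL)
  have hrhL := hrh L (Ico_subset_Icc_self hL)
  have hlt : f' (rh L) < L := by
    have := hf.strictAntiOn_deriv hSL hrhL.1.1
      (hf.lt_of_isGreatest_contactSet hα (hf.tangency_mem_Ioo hV hS hL) (hf'SL.symm ▸ hL.1) hrhL)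
    rwa [hf'SL] at this
  filter_upwards [Ioo_mem_nhdsLT hlt] with u hu hu0
  have hu' : u ∈ Ico 0 V := ⟨hu0, hu.2.trans hL.2⟩
  obtain ⟨hSu, hf'Su⟩ := hS u (Ico_subset_Icc_self hu')
  have hSu_lt : S u < rh L := (hf.strictAntiOn_deriv.lt_iff_gt hrhL.1.1 hSu).1 (hf'Su.symm ▸ hu.1)
  exact (hf.mem_Ioo_of_isLeast_contactSet hα (Ioo_subset_Ioc_self (hf.tangency_mem_Ioo hV hS hu'))
    (hrc u (Ico_subset_Icc_self hu'))).2.trans hSu_lt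

end Contact

end StrictConcaveFlux

theorem stmt_12_general
    (R β B α V : ℝ) (f v f' f'' v' : ℝ → ℝ)
    (hR : 0 < R) (hβ : 0 < β) (hα : α ∈ Set.Ioo (0:ℝ) 1)
    (hf0 : f 0 = 0) (hfR : f R = 0)
    (hfv : ∀ ρ ∈ Set.Icc (0:ℝ) R, f ρ = ρ * v ρ)
    (hfd1 : ∀ ρ ∈ Set.Icc (0:ℝ) R, HasDerivAt f (f' ρ) ρ)
    (hfd2 : ∀ ρ ∈ Set.Icc (0:ℝ) R, HasDerivAt f' (f'' ρ) ρ)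
    (hconc : ∀ ρ ∈ Set.Icc (0:ℝ) R, -B ≤ f'' ρ ∧ f'' ρ ≤ -β)
    (hvd : ∀ ρ ∈ Set.Icc (0:ℝ) R, HasDerivAt v (v' ρ) ρ)
    (hV : V = v 0)
    (rt : ℝ → ℝ)
    (hrt : ∀ u ∈ Set.Icc (0:ℝ) V, rt u ∈ Set.Icc (0:ℝ) (α * R) ∧
      HasDerivAt (fun x => α * f (x / α)) u (rt u))
    (rc rh : ℝ → ℝ)
    (hrc : ∀ u ∈ Set.Icc (0:ℝ) V, IsLeast
      {ρ : ℝ | ρ ∈ Set.Icc (0:ℝ) R ∧ f ρ = α * f (rt u / α) + u * (ρ - rt u)} (rc u))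
    (hrh : ∀ u ∈ Set.Icc (0:ℝ) V, IsGreatest
      {ρ : ℝ | ρ ∈ Set.Icc (0:ℝ) R ∧ f ρ = α * f (rt u / α) + u * (ρ - rt u)} (rh u))
    :
    ∃ ω : ℕ → ℝ, ω 0 = 0 ∧
      (∀ n : ℕ, ω n ∈ Set.Icc (0:ℝ) V ∧
        ω (n + 1) ∈ Set.Icc (0:ℝ) V ∧ rh (ω (n + 1)) = rc (ω n)) ∧
      StrictMono ω ∧ (∀ n : ℕ, ω n < V) ∧
      Filter.Tendsto ω Filter.atTop (nhds V) := by
  have hf'C : ContinuousOn f' (Icc 0 R) := fun x hx => (hfd2 x hx).continuousAt.continuousWithinAt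
  have hf : StrictConcaveFlux f f' R := by
    refine ⟨hR, hf0, hfR, hfd1, hf'C,
      strictAntiOn_of_hasDerivWithinAt_neg (f' := f'') (convex_Icc 0 R) hf'C ?_ ?_⟩ <;>
      rw [interior_Icc]
    · exact fun x hx => (hfd2 x (Ioo_subset_Icc_self hx)).hasDerivWithinAt
    · exact fun x hx => (hconc x (Ioo_subset_Icc_self hx)).2.trans_lt (neg_neg_of_pos hβ)
  have hV' : f' 0 = V := hV ▸ eq_of_hasDerivAt_of_eqOn_id_mul hR hfv
    (hfd1 0 (left_mem_Icc.2 hR.le)) (hvd 0 (left_mem_Icc.2 hR.le))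
  have hS : ∀ u ∈ Icc 0 V, rt u / α ∈ Icc 0 R ∧ f' (rt u / α) = u := by
    intro u hu
    obtain ⟨⟨h0, hαR⟩, hder⟩ := hrt u hu
    have hmem : rt u / α ∈ Icc 0 R := ⟨div_nonneg h0 hα.1.le, (div_le_iff₀' hα.1).2 hαR⟩
    exact ⟨hmem, eq_of_hasDerivAt_const_mul_comp_div hα.1.ne' hder (hfd1 _ hmem)⟩
  have hset : ∀ u ∈ Icc 0 V, contactSet f f' R α (rt u / α) =
      {ρ | ρ ∈ Icc 0 R ∧ f ρ = α * f (rt u / α) + u * (ρ - rt u)} := by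
    intro u hu
    simp only [contactSet, reducedTangent, (hS u hu).2, mul_div_cancel₀ _ hα.1.ne']
  have hrc' := fun u hu => (hset u hu).symm ▸ hrc u hu
  have hrh' := fun u hu => (hset u hu).symm ▸ hrh u hu
  obtain ⟨ω, hω0, hω, hmono, hlim⟩ := exists_strictMono_tendsto_of_step
    (hV' ▸ hf.deriv_zero_pos) (hf.exists_maxContact_eq_minContact hα hV' hS hrc' hrh')
    (hf.strictAntiOn_maxContact hα hV' hS hrh')
    (hf.eventually_minContact_lt_maxContact hα hV' hS hrc' hrh')
  exact ⟨ω, hω0, fun n => ⟨Ico_subset_Icc_self (hω n).1, Ico_subset_Icc_self (hω (n + 1)).1,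
    (hω n).2⟩, hmono, fun n => (hω n).1.2, hlim⟩

theorem stmt_12
    (R β B α V : ℝ) (f v f' f'' v' : ℝ → ℝ)
    (hR : 0 < R) (hβ : 0 < β) (hB : 0 < B) (hα : α ∈ Set.Ioo (0:ℝ) 1)
    (hf0 : f 0 = 0) (hfR : f R = 0)
    (hfv : ∀ ρ ∈ Set.Icc (0:ℝ) R, f ρ = ρ * v ρ)
    (hfd1 : ∀ ρ ∈ Set.Icc (0:ℝ) R, HasDerivAt f (f' ρ) ρ)
    (hfd2 : ∀ ρ ∈ Set.Icc (0:ℝ) R, HasDerivAt f' (f'' ρ) ρ)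
    (hfc : ContinuousOn f'' (Set.Icc (0:ℝ) R))
    (hconc : ∀ ρ ∈ Set.Icc (0:ℝ) R, -B ≤ f'' ρ ∧ f'' ρ ≤ -β)
    (hvd : ∀ ρ ∈ Set.Icc (0:ℝ) R, HasDerivAt v (v' ρ) ρ)
    (hv'neg : ∀ ρ ∈ Set.Ioo (0:ℝ) R, v' ρ < 0)
    (hvnn : ∀ ρ ∈ Set.Icc (0:ℝ) R, 0 ≤ v ρ)
    (hV : V = v 0)
    (rt : ℝ → ℝ)
    (hrt : ∀ u ∈ Set.Icc (0:ℝ) V, rt u ∈ Set.Icc (0:ℝ) (α * R) ∧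
      HasDerivAt (fun x => α * f (x / α)) u (rt u))
    (rc rh : ℝ → ℝ)
    (hrc : ∀ u ∈ Set.Icc (0:ℝ) V, IsLeast
      {ρ : ℝ | ρ ∈ Set.Icc (0:ℝ) R ∧ f ρ = α * f (rt u / α) + u * (ρ - rt u)} (rc u))
    (hrh : ∀ u ∈ Set.Icc (0:ℝ) V, IsGreatest
      {ρ : ℝ | ρ ∈ Set.Icc (0:ℝ) R ∧ f ρ = α * f (rt u / α) + u * (ρ - rt u)} (rh u))
    :
    ∃ ω : ℕ → ℝ, ω 0 = 0 ∧
      (∀ n : ℕ, ω n ∈ Set.Icc (0:ℝ) V ∧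
        ω (n + 1) ∈ Set.Icc (0:ℝ) V ∧ rh (ω (n + 1)) = rc (ω n)) ∧
      StrictMono ω ∧ (∀ n : ℕ, ω n < V) ∧
      Filter.Tendsto ω Filter.atTop (nhds V) :=
  stmt_12_general R β B α V f v f' f'' v' hR hβ hα hf0 hfR hfv hfd1 hfd2 hconc hvd hV rt hrt rc rh
    hrc hrh
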